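/- Let G' be the Type B Whitney flip of a simple graph G along (H, v1, v2). Then G' is bipartite if and only if G is bipartite. -/

import Mathlib

open SimpleGraph

/-- The vertex map of the Type B Whitney flip: `v1 ↦ v2`, all other vertices fixed. -/
def tauB {V : Type*} [DecidableEq V] (v1 v2 : V) (x : V) : V :=
  if x = v1 then v2 else x

/-- The Type B Whitney flip of `G` along `(H, v1, v2)` (where `v2 ∉ H`): edges with both
endpoints in `H` are mapped by `tauB v1 v2`; all other edges are kept. -/
def typeBFlip {V : Type*} [DecidableEq V] (G : SimpleGraph V) (v1 v2 : V) (H : Set V)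
    (hv2 : v2 ∉ H) : SimpleGraph V where
  Adj a b :=
    (∃ x y : V, x ∈ H ∧ y ∈ H ∧ G.Adj x y ∧ a = tauB v1 v2 x ∧ b = tauB v1 v2 y) ∨
    (¬(a ∈ H ∧ b ∈ H) ∧ G.Adj a b)
  symm := by
    constructor
    rintro a b (⟨x, y, hx, hy, h, ha, hb⟩ | ⟨hn, h⟩)
    · exact Or.inl ⟨y, x, hy, hx, h.symm, hb, ha⟩
    · exact Or.inr ⟨fun ⟨hb', ha'⟩ => hn ⟨ha', hb'⟩, h.symm⟩
  loopless := by
    constructor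
    rintro a (⟨x, y, hx, hy, h, ha, hb⟩ | ⟨_, h⟩)
    · have hxy : tauB v1 v2 x = tauB v1 v2 y := ha ▸ hb
      unfold tauB at hxy
      split_ifs at hxy with hx1 hy1 hy1
      · exact h.ne (hx1.trans hy1.symm)
      · exact hv2 (hxy ▸ hy)
      · exact hv2 (hxy ▸ hx)
      · exact h.ne hxy
    · exact G.loopless.irrefl _ h

/-!
A proper 2-colouring `c` of `G` becomes one of the flip by
swapping the two colours on `H \ {v1}`: an edge `v1 y` inside `H` becomes `v2 y`, and `c y = c v2`
since both differ from `c v1`. Conversely a 2-colouring `c'` of the flip gives one of `G` by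
`x ↦ c' (tauB v1 v2 x) + 1` on `H` and `c'` outside `H`; the only edges leaving `H` start at `v1`,
and `c' v2 + 1` is right there because in the flip `v1` is adjacent to `v2` and to all its
neighbours outside `H`, so these all share one colour.
-/

lemma fin_two_ne_add_one (a : Fin 2) : a ≠ a + 1 := by
  revert a; decide

lemma fin_two_eq_of_ne_of_ne {a b c : Fin 2} (hb : a ≠ b) (hc : a ≠ c) : b = c := by
  revert a b c; decide

lemma SimpleGraph.Coloring.eq_of_adj_of_adj {V : Type*} {G : SimpleGraph V}
    (c : G.Coloring (Fin 2)) {a b d : V} (hb : G.Adj a b) (hd : G.Adj a d) : c b = c d :=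
  fin_two_eq_of_ne_of_ne (c.valid hb) (c.valid hd)

section TypeBFlip

variable {V : Type*} [DecidableEq V] {G : SimpleGraph V} {v1 v2 : V} {H : Set V}

@[simp]
lemma tauB_self : tauB v1 v2 v1 = v2 := if_pos rfl

lemma tauB_of_ne {x : V} (hx : x ≠ v1) : tauB v1 v2 x = x := if_neg hx

lemma typeBFlip_adj_tauB (hv2 : v2 ∉ H) {x y : V} (hx : x ∈ H) (hy : y ∈ H) (h : G.Adj x y) :
    (typeBFlip G v1 v2 H hv2).Adj (tauB v1 v2 x) (tauB v1 v2 y) :=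
  Or.inl ⟨x, y, hx, hy, h, rfl, rfl⟩

lemma typeBFlip_adj_of_not_both_mem (hv2 : v2 ∉ H) {a b : V} (hab : ¬(a ∈ H ∧ b ∈ H))
    (h : G.Adj a b) : (typeBFlip G v1 v2 H hv2).Adj a b :=
  Or.inr ⟨hab, h⟩

lemma eq_of_adj_of_mem_of_not_mem (hHedge : ∀ x y : V, G.Adj x y → x ∈ H \ ({v1} : Set V) → y ∈ H)
    {a b : V} (hab : G.Adj a b) (ha : a ∈ H) (hb : b ∉ H) : a = v1 := by
  by_contra h
  exact hb (hHedge a b hab ⟨ha, h⟩)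

lemma typeBFlip_colorable_two (hv2 : v2 ∉ H) (hadj : G.Adj v1 v2)
    (hHedge : ∀ x y : V, G.Adj x y → x ∈ H \ ({v1} : Set V) → y ∈ H) (h : G.Colorable 2) :
    (typeBFlip G v1 v2 H hv2).Colorable 2 := by
  classical
  obtain ⟨c⟩ := h
  let f : V → Fin 2 := fun w => if w ∈ H \ {v1} then c w + 1 else c w
  have inside : ∀ {x y}, x ∈ H → y ∈ H → G.Adj x y → y ≠ v1 → f (tauB v1 v2 x) ≠ f y := by
    intro x y hx hy hxy hy1
    have hfy : f y = c y + 1 := if_pos ⟨hy, hy1⟩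
    rcases eq_or_ne x v1 with rfl | hx1
    · have hfv2 : f v2 = c v2 := if_neg fun h => hv2 h.1
      rw [tauB_self, hfv2, hfy, c.eq_of_adj_of_adj hxy hadj]
      exact fin_two_ne_add_one _
    · rw [tauB_of_ne hx1, hfy, show f x = c x + 1 from if_pos ⟨hx, hx1⟩]
      exact fun h => c.valid hxy (add_right_cancel h)
  have outside : ∀ {a b}, G.Adj a b → ¬(a ∈ H ∧ b ∈ H) → f a = c a := fun hab hn =>
    if_neg fun ha => hn ⟨ha.1, hHedge _ _ hab ha⟩
  refine ⟨Coloring.mk f ?_⟩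
  rintro a b (⟨x, y, hx, hy, hxy, rfl, rfl⟩ | ⟨hn, hab⟩)
  · rcases eq_or_ne y v1 with rfl | hy1
    · rw [tauB_of_ne hxy.ne]
      exact (inside hy hx hxy.symm hxy.ne).symm
    · rw [tauB_of_ne hy1]
      exact inside hx hy hxy hy1
  · rw [outside hab hn, outside hab.symm fun h => hn h.symm]
    exact c.valid hab

lemma colorable_two_of_typeBFlip (hv2 : v2 ∉ H) (hadj : G.Adj v1 v2)
    (hHedge : ∀ x y : V, G.Adj x y → x ∈ H \ ({v1} : Set V) → y ∈ H)
    (h : (typeBFlip G v1 v2 H hv2).Colorable 2) : G.Colorable 2 := by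
  classical
  obtain ⟨c'⟩ := h
  let f : V → Fin 2 := fun x => if x ∈ H then c' (tauB v1 v2 x) + 1 else c' x
  have boundary : ∀ {a b}, G.Adj a b → a ∈ H → b ∉ H → f a ≠ f b := by
    intro a b hab ha hb
    have ha1 := eq_of_adj_of_mem_of_not_mem hHedge hab ha hb
    subst a
    have hb_v2 : c' b = c' v2 :=
      c'.eq_of_adj_of_adj (typeBFlip_adj_of_not_both_mem hv2 (fun h => hb h.2) hab)
        (typeBFlip_adj_of_not_both_mem hv2 (fun h => hv2 h.2) hadj)
    rw [show f v1 = c' v2 + 1 from by simp [f, ha], show f b = c' b from if_neg hb, hb_v2]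
    exact (fin_two_ne_add_one _).symm
  refine ⟨Coloring.mk f fun {a b} hab => ?_⟩
  by_cases ha : a ∈ H <;> by_cases hb : b ∈ H
  · simpa [f, ha, hb] using c'.valid (typeBFlip_adj_tauB hv2 ha hb hab)
  · exact boundary hab ha hb
  · exact (boundary hab.symm hb ha).symm
  · simpa [f, ha, hb] using c'.valid (typeBFlip_adj_of_not_both_mem hv2 (fun h => ha h.1) hab)

end TypeBFlip

theorem typeBFlip_bipartite_iff_general {V : Type*} [DecidableEq V] (G : SimpleGraph V)
    (v1 v2 : V) (hadj : G.Adj v1 v2)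
    (H : Set V) (hv2 : v2 ∉ H)
    (hHedge : ∀ x y : V, G.Adj x y → x ∈ H \ ({v1} : Set V) → y ∈ H) :
    (typeBFlip G v1 v2 H hv2).Colorable 2 ↔ G.Colorable 2 :=
  ⟨colorable_two_of_typeBFlip hv2 hadj hHedge, typeBFlip_colorable_two hv2 hadj hHedge⟩

/-- the Type B Whitney flip of a simple graph is bipartite (2-colorable) if
and only if the original graph is bipartite. -/
theorem typeBFlip_bipartite_iff {V : Type*} [DecidableEq V] (G : SimpleGraph V)
    (v1 v2 : V) (hadj : G.Adj v1 v2)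
    (H : Set V) (h1 : v1 ∈ H) (hv2 : v2 ∉ H) (hHconn : (G.induce H).Connected)
    (hHedge : ∀ x y : V, G.Adj x y → x ∈ H \ ({v1} : Set V) → y ∈ H) :
    (typeBFlip G v1 v2 H hv2).Colorable 2 ↔ G.Colorable 2 :=
  typeBFlip_bipartite_iff_general G v1 v2 hadj H hv2 hHedge
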